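/- Inviting exactly the set V_max achieves the maximum acceptance probability: f(V_max) = f(V) = p_max. -/

import Mathlib

open Finset MeasureTheory

/-- A social network with weights, an initiator `s`, and a target user `t ∉ N_s`. -/
structure FriendNet (V : Type) [Fintype V] [DecidableEq V] where
  G : SimpleGraph V
  adjDec : DecidableRel G.Adj
  w : V → V → ℝ
  w_pos : ∀ u v : V, G.Adj u v → 0 < w u v
  w_le_one : ∀ u v : V, G.Adj u v → w u v ≤ 1
  w_eq_zero : ∀ u v : V, ¬ G.Adj u v → w u v = 0
  w_sum_le_one : ∀ v : V, ∑ u : V, w u v ≤ 1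
  s : V
  t : V
  t_ne_s : t ≠ s
  t_not_friend : ¬ G.Adj s t

variable {V : Type} [Fintype V] [DecidableEq V]

namespace FriendNet

/-- The current friends (neighbors) `N_v` of a user `v`. -/
def Nbr (net : FriendNet V) (v : V) : Finset V :=
  letI := net.adjDec
  Finset.univ.filter fun u => net.G.Adj u v

/-- `Φ(C)`: users not in `C` willing to accept an invitation, given thresholds `θ`. -/
noncomputable def Phi (net : FriendNet V) (θ : V → ℝ) (C : Finset V) : Finset V :=
  Finset.univ.filter fun u => u ∉ C ∧ θ u ≤ ∑ v ∈ C, net.w v u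

/-- One round of the friending process: `C ∪ (Φ(C) ∩ I)`. -/
noncomputable def Cstep (net : FriendNet V) (θ : V → ℝ) (I : Finset V) (C : Finset V) : Finset V :=
  C ∪ (net.Phi θ C ∩ I)

/-- `C_∞(I)`: the final set of the threshold friending process (it stabilizes after
`|V|` rounds). -/
noncomputable def Cinf (net : FriendNet V) (θ : V → ℝ) (I : Finset V) : Finset V :=
  (net.Cstep θ I)^[Fintype.card V] (net.Nbr net.s)

/-- The distribution of the thresholds: i.i.d. uniform on `[0,1]`. -/
noncomputable def thetaMeasure (V : Type) [Fintype V] : Measure (V → ℝ) :=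
  Measure.pi fun _ => volume.restrict (Set.Icc (0 : ℝ) 1)

/-- The acceptance probability `f(I)`: probability over the thresholds that `t ∈ C_∞(I)`. -/
noncomputable def f (net : FriendNet V) (I : Finset V) : ℝ :=
  (thetaMeasure V {θ : V → ℝ | net.t ∈ net.Cinf θ I}).toReal

/-- `p_max`: the maximum acceptance probability over all invitation sets. -/
noncomputable def pmax (net : FriendNet V) : ℝ := ⨆ I : Finset V, net.f I

/-- A realization: each user selects at most one current friend (`none` plays ℵ0). -/
def IsRealization (net : FriendNet V) (g : V → Option V) : Prop :=
  ∀ v u : V, g v = some u → net.G.Adj u v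

/-- `Pr[g]`, the probability of generating the realization `g`. -/
noncomputable def realWeight (net : FriendNet V) (g : V → Option V) : ℝ :=
  ∏ v : V, (g v).elim (1 - ∑ u : V, net.w u v) (fun u => net.w u v)

/-- `Ψ(H)` for a realization `g`. -/
def Psi (g : V → Option V) (H : Finset V) : Finset V :=
  Finset.univ.filter fun v => v ∉ H ∧ ∃ u ∈ H, g v = some u

/-- One round of Process 2: `H ∪ (Ψ(H) ∩ I)`. -/
def Hstep (g : V → Option V) (I : Finset V) (H : Finset V) : Finset V :=
  H ∪ (Psi g H ∩ I)

/-- `H_∞(g, I)`: the final set of Process 2 (it stabilizes after `|V|` rounds). -/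
def Hinf (net : FriendNet V) (g : V → Option V) (I : Finset V) : Finset V :=
  (Hstep g I)^[Fintype.card V] (net.Nbr net.s)

end FriendNet

/-- The loop of Algorithm 1 (backward trace), with fuel. `none` plays ℵ0. -/
def traceAux (g : V → Option V) (Ns : Finset V) : ℕ → V → Finset (Option V) → Finset (Option V)
  | 0, _, acc => acc
  | m + 1, u, acc =>
    match g u with
    | none => insert none acc
    | some v =>
      if some v ∈ acc then insert none acc
      else if v ∈ Ns then acc
      else traceAux g Ns m v (insert (some v) acc)

namespace FriendNet

/-- The backward trace `t(g)` computed by Algorithm 1. -/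
def trace (net : FriendNet V) (g : V → Option V) : Finset (Option V) :=
  traceAux g (net.Nbr net.s) (Fintype.card V + 1) net.t {some net.t}

/-- `f(g, I)`: the indicator that `I` covers `g`, i.e. `t(g) ⊆ I`. -/
noncomputable def fg (net : FriendNet V) (g : V → Option V) (I : Finset V) : ℝ :=
  if net.trace g ⊆ I.image some then 1 else 0

/-- `F(B_l, I) = Σ_{g ∈ B_l} f(g, I)`. -/
noncomputable def F (net : FriendNet V) {l : ℕ} (B : Fin l → V → Option V)
    (I : Finset V) : ℝ :=
  ∑ i : Fin l, net.fg (B i) I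

end FriendNet

instance : MeasurableSpace (V → Option V) := ⊤

/-- The distribution of a random realization `ĝ`. -/
noncomputable def FriendNet.realMeasure (net : FriendNet V) : Measure (V → Option V) :=
  ∑ g : V → Option V, ENNReal.ofReal (net.realWeight g) • Measure.dirac g

open Classical in
/-- `V_max`: users outside `{s} ∪ N_s` lying on some path from `{s} ∪ N_s` to `t`. -/
noncomputable def FriendNet.Vmax (net : FriendNet V) : Finset V :=
  Finset.univ.filter fun u =>
    u ∉ insert net.s (net.Nbr net.s) ∧
      ∃ v ∈ insert net.s (net.Nbr net.s),
        ∃ p : net.G.Walk v net.t, p.IsPath ∧ u ∈ p.support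

/-!
Inviting more users can only help, so `f(V) = p_max`. For `f(V_max) = f(V)` fix thresholds that
are all positive, which happens almost surely, and order the users by the round in which they
join when everybody is invited. A user outside `N_s` with positive threshold joins only after
some friend has joined, so tracing earlier friends backwards from a user `u` on a walk to `t`
along which joining rounds increase yields such a walk from `N_s` to `t`; increasing rounds make
it a path, hence `u ∈ V_max`. Induction on the joining round then shows that every such user also
joins when only `V_max` is invited: every friend that counted towards its threshold does.
-/

theorem Finset.isFixedPt_iterate_card {α : Type*} [Fintype α] {g : Finset α → Finset α}
    (hg : id ≤ g) (s : Finset α) : Function.IsFixedPt g (g^[Fintype.card α] s) := by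
  have hmono : Monotone fun n => g^[n] s := fun m n h => Function.monotone_iterate_of_id_le hg h s
  have hsucc : ∀ n, #(g^[n] s) = #(g^[n + 1] s) → g^[n + 1] s = g^[n] s := fun n h =>
    (Finset.eq_of_subset_of_card_le (hmono n.le_succ) h.ge).symm
  have hcard : #(g^[Fintype.card α + 1] s) = #(g^[Fintype.card α] s) :=
    Nat.stabilises_of_monotone (fun _ _ h => Finset.card_le_card (hmono h))
      (fun _ => Finset.card_le_univ _)
      (fun n h => by
        dsimp only at h ⊢
        rw [Function.iterate_succ_apply' g (n + 1), hsucc n h, ← Function.iterate_succ_apply' g n]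
        exact h)
      (Fintype.card α).le_succ
  rw [Function.IsFixedPt, ← Function.iterate_succ_apply' g]
  exact hsucc _ hcard.symm

namespace FriendNet

variable (net : FriendNet V)

lemma w_nonneg (u v : V) : 0 ≤ net.w u v := by
  by_cases h : net.G.Adj u v
  · exact (net.w_pos u v h).le
  · rw [net.w_eq_zero u v h]

lemma adj_of_w_ne_zero {u v : V} (h : net.w u v ≠ 0) : net.G.Adj u v :=
  not_not.1 fun hn => h (net.w_eq_zero u v hn)

lemma mem_Nbr {u v : V} : u ∈ net.Nbr v ↔ net.G.Adj u v := by
  simp [Nbr]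

section Thresholds

variable (θ : V → ℝ)

lemma le_Cstep (I : Finset V) : id ≤ net.Cstep θ I := fun _ => Finset.subset_union_left

lemma Cstep_mono {I I' C C' : Finset V} (hI : I ⊆ I') (hC : C ⊆ C') :
    net.Cstep θ I C ⊆ net.Cstep θ I' C' := by
  intro x hx
  rcases Finset.mem_union.1 hx with hxC | hxI
  · exact Finset.mem_union_left _ (hC hxC)
  by_cases hxC' : x ∈ C'
  · exact Finset.mem_union_left _ hxC'
  obtain ⟨hΦ, hxI⟩ := Finset.mem_inter.1 hxI
  simp only [Phi, Finset.mem_filter, Finset.mem_univ, true_and] at hΦ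
  refine Finset.mem_union_right _ (Finset.mem_inter.2 ⟨?_, hI hxI⟩)
  simp only [Phi, Finset.mem_filter, Finset.mem_univ, true_and]
  exact ⟨hxC', hΦ.2.trans
    (Finset.sum_le_sum_of_subset_of_nonneg hC fun v _ _ => net.w_nonneg v x)⟩

lemma Cinf_mono {I I' : Finset V} (h : I ⊆ I') : net.Cinf θ I ⊆ net.Cinf θ I' :=
  Monotone.iterate_le_of_le (fun _ _ hC => net.Cstep_mono θ subset_rfl hC)
    (fun _ => net.Cstep_mono θ h subset_rfl) _ _

lemma Nbr_subset_Cinf (I : Finset V) : net.Nbr net.s ⊆ net.Cinf θ I :=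
  Function.monotone_iterate_of_id_le (net.le_Cstep θ I) (Nat.zero_le _) _

lemma isFixedPt_Cinf (I : Finset V) : Function.IsFixedPt (net.Cstep θ I) (net.Cinf θ I) :=
  Finset.isFixedPt_iterate_card (net.le_Cstep θ I) _

noncomputable def stage (i : ℕ) : Finset V :=
  (net.Cstep θ Finset.univ)^[i] (net.Nbr net.s)

/-- The round in which `u` joins when everybody is invited (`0` if it never joins). -/
noncomputable def joinRound (u : V) : ℕ :=
  sInf {i | u ∈ net.stage θ i}

variable {net θ}

lemma mem_stage_joinRound {u : V} {i : ℕ} (hu : u ∈ net.stage θ i) :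
    u ∈ net.stage θ (net.joinRound θ u) :=
  Nat.sInf_mem (s := {i | u ∈ net.stage θ i}) ⟨i, hu⟩

lemma joinRound_le {u : V} {i : ℕ} (hu : u ∈ net.stage θ i) : net.joinRound θ u ≤ i :=
  Nat.sInf_le hu

lemma exists_threshold_le_sum_stage {u : V} {i : ℕ} (hu : u ∈ net.stage θ i)
    (hns : u ∉ net.Nbr net.s) :
    ∃ j, net.joinRound θ u = j + 1 ∧ θ u ≤ ∑ v ∈ net.stage θ j, net.w v u := by
  have hmem := mem_stage_joinRound hu
  obtain ⟨j, hj⟩ : ∃ j, net.joinRound θ u = j + 1 :=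
    Nat.exists_eq_add_one.2 (Nat.pos_of_ne_zero fun h => hns (by rwa [h] at hmem))
  have hnot : u ∉ net.stage θ j := fun h => by
    have := joinRound_le h
    omega
  rw [hj, stage, Function.iterate_succ_apply'] at hmem
  rcases Finset.mem_union.1 hmem with h | h
  · exact absurd h hnot
  · simp only [Phi, Finset.mem_inter, Finset.mem_filter] at h
    exact ⟨j, hj, h.1.2.2⟩

lemma joinRound_lt_of_mem_stage {u v : V} {j : ℕ} (hu : net.joinRound θ u = j + 1)
    (hv : v ∈ net.stage θ j) : net.joinRound θ v < net.joinRound θ u :=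
  hu ▸ Nat.lt_succ_of_le (joinRound_le hv)

def IsJoinOrdered (θ : V → ℝ) {u x : V} (q : net.G.Walk u x) : Prop :=
  q.support.IsChain fun a b => net.joinRound θ a < net.joinRound θ b

lemma IsJoinOrdered.isPath {u x : V} {q : net.G.Walk u x} (hq : IsJoinOrdered θ q) :
    q.IsPath := by
  rw [SimpleGraph.Walk.isPath_def]
  have hsorted := List.isChain_iff_pairwise.1 ((List.isChain_map (net.joinRound θ)).2 hq)
  exact hsorted.nodup.of_map _

lemma IsJoinOrdered.cons_of_mem_stage {u v x : V} {j : ℕ} (hu : net.joinRound θ u = j + 1)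
    (hv : v ∈ net.stage θ j) (hw : net.w v u ≠ 0) {q : net.G.Walk u x}
    (hq : IsJoinOrdered θ q) : IsJoinOrdered θ (.cons (net.adj_of_w_ne_zero hw) q) := by
  rw [IsJoinOrdered, SimpleGraph.Walk.support_cons, ← SimpleGraph.Walk.cons_tail_support,
    List.isChain_cons_cons]
  exact ⟨joinRound_lt_of_mem_stage hu hv, by rwa [SimpleGraph.Walk.cons_tail_support]⟩

lemma IsJoinOrdered.exists_path_from_Nbr (hθ : ∀ v, 0 < θ v) {u x : V} {i : ℕ}
    (hu : u ∈ net.stage θ i) {q : net.G.Walk u x} (hq : IsJoinOrdered θ q) :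
    ∃ y ∈ net.Nbr net.s, ∃ r : net.G.Walk y x, r.IsPath ∧ q.support ⊆ r.support := by
  induction hk : net.joinRound θ u using Nat.strong_induction_on generalizing u i with
  | _ k ih =>
  by_cases hns : u ∈ net.Nbr net.s
  · exact ⟨u, hns, q, hq.isPath, List.Subset.refl _⟩
  obtain ⟨j, hj, hsum⟩ := exists_threshold_le_sum_stage hu hns
  obtain ⟨v, hv, hw⟩ : ∃ v ∈ net.stage θ j, net.w v u ≠ 0 := by
    by_contra! h
    exact (hθ u).not_ge (hsum.trans_eq (Finset.sum_eq_zero h))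
  obtain ⟨y, hy, r, hr, hsub⟩ :=
    ih _ (hk ▸ joinRound_lt_of_mem_stage hj hv) hv (hq.cons_of_mem_stage hj hv hw) rfl
  exact ⟨y, hy, r, hr, fun z hz => hsub (List.mem_cons_of_mem _ hz)⟩

lemma IsJoinOrdered.mem_Cinf_Vmax (hθ : ∀ v, 0 < θ v) {u : V} {i : ℕ}
    (hu : u ∈ net.stage θ i) (hus : u ≠ net.s) {q : net.G.Walk u net.t}
    (hq : IsJoinOrdered θ q) : u ∈ net.Cinf θ net.Vmax := by
  induction hk : net.joinRound θ u using Nat.strong_induction_on generalizing u i with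
  | _ k ih =>
  by_cases hns : u ∈ net.Nbr net.s
  · exact net.Nbr_subset_Cinf θ _ hns
  obtain ⟨j, hj, hsum⟩ := exists_threshold_le_sum_stage hu hns
  have hcontrib : ∀ v ∈ net.stage θ j, net.w v u ≠ 0 → v ∈ net.Cinf θ net.Vmax := by
    intro v hv hw
    have hvs : v ≠ net.s := by
      rintro rfl
      exact hns (net.mem_Nbr.2 (net.adj_of_w_ne_zero hw).symm)
    exact ih _ (hk ▸ joinRound_lt_of_mem_stage hj hv) hv hvs
      (hq.cons_of_mem_stage hj hv hw) rfl
  have hthreshold : θ u ≤ ∑ v ∈ net.Cinf θ net.Vmax, net.w v u :=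
    calc θ u ≤ ∑ v ∈ net.stage θ j, net.w v u := hsum
      _ = ∑ v ∈ (net.stage θ j).filter (net.w · u ≠ 0), net.w v u :=
          (Finset.sum_filter_ne_zero _).symm
      _ ≤ ∑ v ∈ net.Cinf θ net.Vmax, net.w v u :=
          Finset.sum_le_sum_of_subset_of_nonneg
            (fun v hv => hcontrib v (Finset.mem_filter.1 hv).1 (Finset.mem_filter.1 hv).2)
            fun v _ _ => net.w_nonneg v u
  have hVmax : u ∈ net.Vmax := by
    obtain ⟨y, hy, r, hr, hsub⟩ := hq.exists_path_from_Nbr hθ hu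
    classical
    simp only [Vmax, Finset.mem_filter, Finset.mem_univ, true_and, Finset.mem_insert, not_or]
    exact ⟨⟨hus, hns⟩, y, Or.inr hy, r, hr, hsub q.start_mem_support⟩
  by_contra hD
  have hjoins : u ∈ net.Cstep θ net.Vmax (net.Cinf θ net.Vmax) := by
    refine Finset.mem_union_right _ (Finset.mem_inter.2 ⟨?_, hVmax⟩)
    simp only [Phi, Finset.mem_filter, Finset.mem_univ, true_and]
    exact ⟨hD, hthreshold⟩
  exact hD ((net.isFixedPt_Cinf θ net.Vmax).eq ▸ hjoins)

lemma t_mem_Cinf_Vmax_of_mem_Cinf_univ (hθ : ∀ v, 0 < θ v)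
    (ht : net.t ∈ net.Cinf θ Finset.univ) : net.t ∈ net.Cinf θ net.Vmax :=
  IsJoinOrdered.mem_Cinf_Vmax hθ (i := Fintype.card V) ht net.t_ne_s (q := .nil)
    (List.isChain_singleton _)

end Thresholds

instance {ι : Type} [Fintype ι] : IsProbabilityMeasure (thetaMeasure ι) := by
  have : IsProbabilityMeasure (volume.restrict (Set.Icc (0 : ℝ) 1)) :=
    ⟨by simp [Real.volume_Icc]⟩
  unfold thetaMeasure
  infer_instance

lemma ae_thetaMeasure_pos {ι : Type} [Fintype ι] :
    ∀ᵐ θ ∂thetaMeasure ι, ∀ i, 0 < θ i := by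
  refine ae_all_iff.2 fun i => Measure.tendsto_eval_ae_ae.eventually ?_
  rw [ae_restrict_iff' measurableSet_Icc]
  filter_upwards [Measure.ae_ne volume 0] with x hx hxI
  exact lt_of_le_of_ne hxI.1 hx.symm

lemma f_le_f_univ (I : Finset V) : net.f I ≤ net.f Finset.univ :=
  ENNReal.toReal_mono (measure_ne_top _ _)
    (measure_mono fun θ hθ => net.Cinf_mono θ (Finset.subset_univ I) hθ)

lemma f_Vmax_eq_f_univ : net.f net.Vmax = net.f Finset.univ := by
  refine congrArg ENNReal.toReal (measure_congr (Filter.eventuallyEq_set.2 ?_))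
  filter_upwards [ae_thetaMeasure_pos] with θ hθ
  exact ⟨fun h => net.Cinf_mono θ (Finset.subset_univ _) h,
    t_mem_Cinf_Vmax_of_mem_Cinf_univ hθ⟩

end FriendNet

/-- part of Lemma 8: inviting exactly `V_max` achieves the maximum
acceptance probability, `f(V_max) = f(V) = p_max`. -/
theorem Vmax_achieves_pmax (net : FriendNet V) :
    net.f net.Vmax = net.f Finset.univ ∧ net.f Finset.univ = net.pmax :=
  ⟨net.f_Vmax_eq_f_univ,
    le_antisymm (le_ciSup (Set.finite_range net.f).bddAbove _) (ciSup_le net.f_le_f_univ)⟩
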